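/- arXiv:2111.12564 — 2 statements merged into one kernel-verified Lean document; each statement's English description precedes it below -/
import Mathlib

section
/- Fix ν ∈ ℝ, σ > 0 and T > 0, and let γ be the Gaussian measure on ℝ with mean νT and variance σ²T. Then the map C ↦ E[ν̂ | R̃_T > C] is strictly monotone increasing on ℝ: if C₁ < C₂ then E[ν̂ | R̃_T > C₁] < E[ν̂ | R̃_T > C₂]. -/
open MeasureTheory ProbabilityTheory Set Real
open scoped NNReal ENNReal

lemma integrable_id_gaussianReal (m : ℝ) {v : ℝ≥0} (hv : v ≠ 0) :
    Integrable (fun x : ℝ => x) (gaussianReal m v) := by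
  have hv0 : (0:ℝ) < (v:ℝ) := lt_of_le_of_ne v.2 (by exact_mod_cast hv.symm)
  have hb : (0:ℝ) < (2 * (v:ℝ))⁻¹ := by positivity
  have h1 : Integrable (fun x : ℝ => x * rexp (-(2 * (v:ℝ))⁻¹ * x ^ 2)) :=
    integrable_mul_exp_neg_mul_sq hb
  have h2 : Integrable (fun x : ℝ => rexp (-(2 * (v:ℝ))⁻¹ * x ^ 2)) :=
    integrable_exp_neg_mul_sq hb
  have hg : Integrable (fun x : ℝ =>
      (√(2 * π * v))⁻¹ * (x * rexp (-(2 * (v:ℝ))⁻¹ * x ^ 2)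
        + m * rexp (-(2 * (v:ℝ))⁻¹ * x ^ 2))) :=
    (h1.add (h2.const_mul m)).const_mul _
  have hg' := hg.comp_sub_right m
  rw [gaussianReal_of_var_ne_zero m hv,
    integrable_withDensity_iff (measurable_gaussianPDF m v)
      (Filter.Eventually.of_forall fun x => ENNReal.ofReal_lt_top)]
  have heq : (fun x : ℝ => x * (gaussianPDF m v x).toReal) =
      fun x : ℝ => (√(2 * π * v))⁻¹ * ((x - m) * rexp (-(2 * (v:ℝ))⁻¹ * (x - m) ^ 2)
        + m * rexp (-(2 * (v:ℝ))⁻¹ * (x - m) ^ 2)) := by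
    funext x
    rw [gaussianPDF, ENNReal.toReal_ofReal (gaussianPDFReal_nonneg _ _ _), gaussianPDFReal]
    have : -(x - m) ^ 2 / (2 * (v:ℝ)) = -(2 * (v:ℝ))⁻¹ * (x - m) ^ 2 := by
      field_simp
    rw [this]
    ring
  rw [heq]
  exact hg'

lemma gaussianReal_Ioi_pos (m : ℝ) {v : ℝ≥0} (hv : v ≠ 0) (C : ℝ) :
    0 < gaussianReal m v (Ioi C) := by
  by_contra h
  push_neg at h
  have h0 : gaussianReal m v (Ioi C) = 0 := le_antisymm h (zero_le)
  have := gaussianReal_absolutelyContinuous' m hv h0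
  rw [Real.volume_Ioi] at this
  exact ENNReal.top_ne_zero this

/-- `E[ν̂ | R̃_T > C]`, where the return `R̃_T ∼ N(νT, σ²T)` and `ν̂ = R̃_T / T`. -/
noncomputable def condExpDriftGt (ν σ T C : ℝ) : ℝ :=
  (∫ y in Ioi C, y / T ∂(gaussianReal (ν * T) (Real.toNNReal (σ ^ 2 * T)))) /
    ((gaussianReal (ν * T) (Real.toNNReal (σ ^ 2 * T))) (Ioi C)).toReal

/-- Section 3.2.2, Figure 1: for fixed drift, a higher threshold `C` gives a strictly
higher conditional return expectation. -/
theorem condExpDriftGt_strictMono_in_C (ν σ T : ℝ) (hσ : 0 < σ) (hT : 0 < T) :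
    ∀ C₁ C₂ : ℝ, C₁ < C₂ → condExpDriftGt ν σ T C₁ < condExpDriftGt ν σ T C₂ := by
  intro C₁ C₂ hC
  set v : ℝ≥0 := Real.toNNReal (σ ^ 2 * T) with hvdef
  have hv : v ≠ 0 := by
    simp only [hvdef, ne_eq, Real.toNNReal_eq_zero, not_le]
    positivity
  set γ : Measure ℝ := gaussianReal (ν * T) v with hγdef
  have : IsProbabilityMeasure γ := by rw [hγdef]; infer_instance
  have hint : Integrable (fun y : ℝ => y / T) γ := by
    simpa [div_eq_mul_inv] using (integrable_id_gaussianReal (ν * T) hv).mul_const T⁻¹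
  -- measures of pieces
  set a : ℝ := (γ (Ioc C₁ C₂)).toReal with hadef
  set b : ℝ := (γ (Ioi C₂)).toReal with hbdef
  have hbpos : 0 < b := ENNReal.toReal_pos (gaussianReal_Ioi_pos _ hv C₂).ne' (measure_ne_top _ _)
  have hapos : 0 < a := by
    have h1 : 0 < γ (Ioi C₁) := gaussianReal_Ioi_pos _ hv C₁
    have hsplit : γ (Ioi C₁) = γ (Ioc C₁ C₂) + γ (Ioi C₂) := by
      rw [← Ioc_union_Ioi_eq_Ioi hC.le,
        measure_union (Ioc_disjoint_Ioi le_rfl) measurableSet_Ioi]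
    -- strict positivity of Ioc piece from absolute continuity
    by_contra h
    push_neg at h
    have ha0 : γ (Ioc C₁ C₂) = 0 := by
      rw [hadef] at h
      have := ENNReal.toReal_nonneg (a := γ (Ioc C₁ C₂))
      have h0 : (γ (Ioc C₁ C₂)).toReal = 0 := le_antisymm h this
      exact (ENNReal.toReal_eq_zero_iff _).mp h0 |>.resolve_right (measure_ne_top _ _)
    have := gaussianReal_absolutelyContinuous' (ν * T) hv ha0
    rw [Real.volume_Ioc] at this
    simp only [ENNReal.ofReal_eq_zero, sub_nonpos] at this
    exact absurd this (not_le.mpr hC)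
  set A : ℝ := ∫ y in Ioc C₁ C₂, y / T ∂γ with hAdef
  set B : ℝ := ∫ y in Ioi C₂, y / T ∂γ with hBdef
  have hIocInt : IntegrableOn (fun y : ℝ => y / T) (Ioc C₁ C₂) γ := hint.integrableOn
  have hIoiInt : IntegrableOn (fun y : ℝ => y / T) (Ioi C₂) γ := hint.integrableOn
  -- split of integral
  have hsplitI : (∫ y in Ioi C₁, y / T ∂γ) = A + B := by
    rw [← Ioc_union_Ioi_eq_Ioi hC.le,
      setIntegral_union (Ioc_disjoint_Ioi le_rfl) measurableSet_Ioi hIocInt hIoiInt]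
  have hsplitm : ((γ (Ioi C₁)).toReal : ℝ) = a + b := by
    rw [← Ioc_union_Ioi_eq_Ioi hC.le,
      measure_union (Ioc_disjoint_Ioi le_rfl) measurableSet_Ioi,
      ENNReal.toReal_add (measure_ne_top _ _) (measure_ne_top _ _)]
  -- A ≤ (C₂ / T) * a
  have hA : A ≤ (C₂ / T) * a := by
    have h1 : A ≤ ∫ _ in Ioc C₁ C₂, C₂ / T ∂γ := by
      refine setIntegral_mono_on hIocInt ((integrableOn_const_iff (C := C₂ / T)).mpr (Or.inr ?_))
        measurableSet_Ioc fun y hy => ?_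
      · exact lt_of_le_of_lt (measure_mono (subset_univ _)) (measure_lt_top _ _)
      · exact div_le_div_of_nonneg_right hy.2 hT.le |>.trans_eq rfl
    rwa [setIntegral_const, smul_eq_mul, mul_comm] at h1
  -- (C₂ / T) * b < B
  have hB : (C₂ / T) * b < B := by
    have hnn : 0 ≤ᵐ[γ.restrict (Ioi C₂)] fun y => y / T - C₂ / T := by
      refine (ae_restrict_iff' measurableSet_Ioi).2 (Filter.Eventually.of_forall fun y hy => ?_)
      have : C₂ / T ≤ y / T := div_le_div_of_nonneg_right (le_of_lt hy) hT.le
      simp only [Pi.zero_apply]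
      linarith
    have hintsub : IntegrableOn (fun y : ℝ => y / T - C₂ / T) (Ioi C₂) γ := by
      refine hIoiInt.sub ((integrableOn_const_iff (C := C₂ / T)).mpr (Or.inr ?_))
      exact lt_of_le_of_lt (measure_mono (subset_univ _)) (measure_lt_top _ _)
    have hpos : 0 < ∫ y in Ioi C₂, (y / T - C₂ / T) ∂γ := by
      rw [setIntegral_pos_iff_support_of_nonneg_ae hnn hintsub]
      refine lt_of_lt_of_le (gaussianReal_Ioi_pos _ hv C₂) (measure_mono fun y hy => ?_)
      refine ⟨?_, hy⟩
      have : C₂ / T < y / T := div_lt_div_of_pos_right hy hT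
      simp only [Function.mem_support]
      intro h
      rw [sub_eq_zero] at h
      exact absurd h (ne_of_gt this)
    rw [integral_sub hIoiInt ((integrableOn_const_iff (C := C₂ / T)).mpr
        (Or.inr (lt_of_le_of_lt (measure_mono (subset_univ _)) (measure_lt_top _ _)))),
      setIntegral_const, smul_eq_mul, measureReal_def] at hpos
    rw [mul_comm]
    linarith
  -- conclude
  have habpos : 0 < a + b := by linarith
  unfold condExpDriftGt
  rw [← hγdef, ← hvdef] at *
  rw [hsplitI, hsplitm, ← hBdef, ← hbdef]
  rw [div_lt_div_iff₀ habpos hbpos]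
  nlinarith [mul_lt_mul_of_pos_left hB hapos, mul_le_mul_of_nonneg_right hA hbpos.le]
end

section
/- Fix σ > 0, T > 0 and C ∈ ℝ. Then the bias ν ↦ E[ν̂ | R̃_T > C] − ν, where the conditional expectation is taken under the Gaussian measure with mean νT and variance σ²T, is strictly decreasing in ν: if ν₁ < ν₂ then E[ν̂₁ | R̃_T > C] − ν₁ > E[ν̂₂ | R̃_T > C] − ν₂. -/
open MeasureTheory ProbabilityTheory Set

/-- The identity function is integrable w.r.t. the centered Gaussian measure. -/
lemma integrable_id_gaussianReal_zero {v : NNReal} (hv : v ≠ 0) :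
    Integrable (fun x : ℝ => x) (gaussianReal 0 v) := by
  have hvpos : (0 : ℝ) < v := by
    exact_mod_cast pos_iff_ne_zero.mpr hv
  rw [gaussianReal_of_var_ne_zero _ hv,
    integrable_withDensity_iff (measurable_gaussianPDF _ _)
      (ae_of_all _ fun x => ENNReal.ofReal_lt_top)]
  have heq : (fun x : ℝ => x * (gaussianPDF 0 v x).toReal)
      = fun x : ℝ => (Real.sqrt (2 * Real.pi * v))⁻¹ *
        (x * Real.exp (-(2 * (v : ℝ))⁻¹ * x ^ 2)) := by
    funext x
    rw [gaussianPDF, ENNReal.toReal_ofReal (gaussianPDFReal_nonneg _ _ _), gaussianPDFReal]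
    have harg : -(x - 0) ^ 2 / (2 * (v : ℝ)) = -(2 * (v : ℝ))⁻¹ * x ^ 2 := by
      field_simp
      ring
    rw [harg]
    ring
  rw [heq]
  exact (integrable_mul_exp_neg_mul_sq (by positivity)).const_mul _

/-- Centered Gaussian measure is positive on sets of positive Lebesgue measure. -/
lemma gaussianReal_zero_pos {v : NNReal} (hv : v ≠ 0) {s : Set ℝ}
    (hs : volume s ≠ 0) : gaussianReal 0 v s ≠ 0 := by
  intro h
  exact hs ((gaussianReal_absolutelyContinuous' 0 hv) h)

/-- Key monotonicity: the conditional expectation of a centered Gaussian on `Ioi c`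
is strictly increasing in `c`. -/
lemma condExp_Ioi_strictMono {v : NNReal} (hv : v ≠ 0) {c c' : ℝ} (h : c < c') :
    (∫ x in Ioi c, x ∂(gaussianReal 0 v)) / ((gaussianReal 0 v) (Ioi c)).toReal
      < (∫ x in Ioi c', x ∂(gaussianReal 0 v)) / ((gaussianReal 0 v) (Ioi c')).toReal := by
  set G := gaussianReal 0 v with hG
  have hint : Integrable (fun x : ℝ => x) G := integrable_id_gaussianReal_zero hv
  set p : ℝ := (G (Ioc c c')).toReal with hpdef
  set q : ℝ := (G (Ioi c')).toReal with hqdef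
  set a : ℝ := ∫ x in Ioc c c', x ∂G with hadef
  set b : ℝ := ∫ x in Ioi c', x ∂G with hbdef
  have hp : 0 < p := by
    refine ENNReal.toReal_pos ?_ (measure_ne_top _ _)
    refine gaussianReal_zero_pos hv ?_
    rw [Real.volume_Ioc]
    exact (ENNReal.ofReal_pos.mpr (by linarith)).ne'
  have hq : 0 < q := by
    refine ENNReal.toReal_pos ?_ (measure_ne_top _ _)
    refine gaussianReal_zero_pos hv ?_
    simp [Real.volume_Ioi]
  have hsplit_set : Ioc c c' ∪ Ioi c' = Ioi c := Ioc_union_Ioi_eq_Ioi h.le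
  have hmeas : (G (Ioi c)).toReal = p + q := by
    rw [← hsplit_set, measure_union (Ioc_disjoint_Ioi le_rfl) measurableSet_Ioi,
      ENNReal.toReal_add (measure_ne_top _ _) (measure_ne_top _ _)]
  have hintsplit : ∫ x in Ioi c, x ∂G = a + b := by
    rw [← hsplit_set, setIntegral_union (Ioc_disjoint_Ioi le_rfl) measurableSet_Ioi
      hint.integrableOn hint.integrableOn]
  have ha : a ≤ c' * p := by
    have hmono := setIntegral_mono_on (μ := G) (f := fun x : ℝ => x) (g := fun _ : ℝ => c')
      (s := Ioc c c') hint.integrableOn (integrable_const c').integrableOn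
      measurableSet_Ioc (fun x hx => hx.2)
    rwa [setIntegral_const, smul_eq_mul, mul_comm] at hmono
  have hb : c' * q < b := by
    have hpos : 0 < ∫ x in Ioi c', (x - c') ∂G := by
      rw [setIntegral_pos_iff_support_of_nonneg_ae ?_ ?_]
      · have hsub : Ioi c' ⊆ Function.support (fun x : ℝ => x - c') ∩ Ioi c' := by
          intro x hx
          exact ⟨sub_ne_zero.mpr (ne_of_gt hx), hx⟩
        refine lt_of_lt_of_le ?_ (measure_mono hsub)
        rw [pos_iff_ne_zero]
        refine gaussianReal_zero_pos hv ?_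
        simp [Real.volume_Ioi]
      · filter_upwards [ae_restrict_mem measurableSet_Ioi] with x hx
        have hx' := mem_Ioi.mp hx
        show (0 : ℝ) ≤ x - c'
        linarith
      · exact (hint.sub (integrable_const c')).integrableOn
    have heq : ∫ x in Ioi c', (x - c') ∂G = b - c' * q := by
      rw [integral_sub hint.integrableOn (integrable_const c').integrableOn,
        setIntegral_const, smul_eq_mul, mul_comm]
      rfl
    linarith [heq ▸ hpos]
  rw [hmeas, hintsplit]
  rw [div_lt_div_iff₀ (by linarith) hq]
  nlinarith

/-- The bias equals a ratio involving the centered Gaussian. -/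
lemma condExpDriftGt_bias_eq (ν σ T C : ℝ) (hσ : 0 < σ) (hT : 0 < T) :
    condExpDriftGt ν σ T C - ν
      = ((∫ x in Ioi (C - ν * T), x ∂(gaussianReal 0 (Real.toNNReal (σ ^ 2 * T)))) /
          ((gaussianReal 0 (Real.toNNReal (σ ^ 2 * T))) (Ioi (C - ν * T))).toReal) / T := by
  set v : NNReal := Real.toNNReal (σ ^ 2 * T) with hvdef
  have hv : v ≠ 0 := (Real.toNNReal_pos.mpr (by positivity)).ne'
  set G := gaussianReal 0 v with hG
  set μ : ℝ := ν * T with hμdef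
  have hint : Integrable (fun x : ℝ => x) G := integrable_id_gaussianReal_zero hv
  have hmap : gaussianReal μ v = G.map (· + μ) := by
    rw [hG, gaussianReal_map_add_const, zero_add]
  have hpre : (fun x : ℝ => x + μ) ⁻¹' (Ioi C) = Ioi (C - μ) := by
    ext x
    simp [sub_lt_iff_lt_add]
  set m : ℝ := (G (Ioi (C - μ))).toReal with hmdef
  have hm : 0 < m := by
    refine ENNReal.toReal_pos ?_ (measure_ne_top _ _)
    refine gaussianReal_zero_pos hv ?_
    simp [Real.volume_Ioi]
  have hmeasval : ((gaussianReal μ v) (Ioi C)).toReal = m := by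
    rw [hmap, Measure.map_apply (measurable_add_const μ) measurableSet_Ioi, hpre]
  set I : ℝ := ∫ x in Ioi (C - μ), x ∂G with hIdef
  have hintval : ∫ y in Ioi C, y / T ∂(gaussianReal μ v) = (I + μ * m) / T := by
    have hsm : AEStronglyMeasurable (fun y : ℝ => y / T)
        (Measure.map (fun x : ℝ => x + μ) G) :=
      (measurable_id.div_const T).aestronglyMeasurable
    rw [hmap, setIntegral_map measurableSet_Ioi hsm (measurable_add_const μ).aemeasurable,
      hpre]
    rw [integral_div, integral_add hint.integrableOn (integrable_const μ).integrableOn,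
      setIntegral_const, smul_eq_mul, ← hIdef, Measure.real, ← hmdef, mul_comm m μ]
  rw [condExpDriftGt, ← hvdef, ← hμdef, hintval, hmeasval, hμdef]
  field_simp
  ring

/-- Section 3.2.2, Figure 1: for fixed threshold `C`, the bias
`E[ν̂ | R̃_T > C] − ν` is strictly decreasing in the drift `ν`. -/
theorem condExpDriftGt_bias_strictAnti_in_nu (σ T C : ℝ) (hσ : 0 < σ) (hT : 0 < T) :
    ∀ ν₁ ν₂ : ℝ, ν₁ < ν₂ →
      condExpDriftGt ν₂ σ T C - ν₂ < condExpDriftGt ν₁ σ T C - ν₁ := by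
  intro ν₁ ν₂ hν
  have hv : (Real.toNNReal (σ ^ 2 * T)) ≠ 0 := (Real.toNNReal_pos.mpr (by positivity)).ne'
  rw [condExpDriftGt_bias_eq ν₁ σ T C hσ hT, condExpDriftGt_bias_eq ν₂ σ T C hσ hT]
  have hc : C - ν₂ * T < C - ν₁ * T := by nlinarith
  have := condExp_Ioi_strictMono hv hc
  gcongr
end
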